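/- arXiv:1605.03273 — 2 statements merged into one kernel-verified Lean document; each statement's English description precedes it below -/
import Mathlib

section
/- For an associative unital k-algebra A, a commutative unital k-algebra B, an algebra morphism ε : B → A with ε(B) contained in the center of A, and an A-bimodule M that is B-symmetric, the secondary Hochschild coboundary maps δ_n^ε : Hom_k(A^{⊗n} ⊗ B^{⊗ n(n-1)/2}, M) → Hom_k(A^{⊗(n+1)} ⊗ B^{⊗ n(n+1)/2}, M) satisfy δ_{n+1}^ε ∘ δ_n^ε = 0, so (C^•((A,B,ε);M), δ^ε) is a cochain complex. -/
/-!
STATEMENT 0: The secondary Hochschild coboundary maps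
δ_n^ε : Hom_k(A^{⊗n} ⊗ B^{⊗ n(n-1)/2}, M) → Hom_k(A^{⊗(n+1)} ⊗ B^{⊗ n(n+1)/2}, M)
satisfy δ_{n+1}^ε ∘ δ_n^ε = 0.

We model Hom_k(A^{⊗n} ⊗ B^{⊗ n(n-1)/2}, M) faithfully as the space of k-linear maps
out of the tensor product `(⨂_{i : Fin n} A) ⊗ (⨂_{(i,j), i<j} B)` (the matrix
representation: diagonal entries a_0,…,a_{n-1} ∈ A and entries b_{i,j} ∈ B for i<j).
The coboundary δ is any family of maps satisfying the defining formula of the paper on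
the (spanning) pure tensors; the theorem asserts δ∘δ = 0 for such a family.
-/

open scoped TensorProduct
open MulOpposite PiTensorProduct

noncomputable section

/-- Index set for the strictly upper triangular positions of an `m × m` matrix. -/
abbrev UT (m : ℕ) := {p : Fin m × Fin m // p.1 < p.2}

/-- The tensor space `A^{⊗ m} ⊗ B^{⊗ m(m-1)/2}` in its matrix representation. -/
def TS (k A B : Type) [Field k] [Ring A] [Algebra k A] [CommRing B] [Algebra k B]
    (m : ℕ) : Type :=
  (⨂[k] _ : Fin m, A) ⊗[k] (⨂[k] _ : UT m, B)

variable (k A B : Type) [Field k] [Ring A] [Algebra k A] [CommRing B] [Algebra k B]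

instance (m : ℕ) : AddCommGroup (TS k A B m) :=
  inferInstanceAs (AddCommGroup ((⨂[k] _ : Fin m, A) ⊗[k] (⨂[k] _ : UT m, B)))

instance (m : ℕ) : Module k (TS k A B m) :=
  inferInstanceAs (Module k ((⨂[k] _ : Fin m, A) ⊗[k] (⨂[k] _ : UT m, B)))

/-- The pure tensor (generator) determined by diagonal entries `a` and
upper-triangular entries `β` (read at indices `< m`). -/
def gen (m : ℕ) (a : ℕ → A) (β : ℕ → ℕ → B) : TS k A B m :=
  (tprod k fun i : Fin m => a i) ⊗ₜ[k] (tprod k fun p : UT m => β p.1.1 p.1.2)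

/-- The diagonal of the matrix obtained by merging the diagonal entries `i` and `i+1`
via `a_i a_{i+1} ε(b_{i,i+1})`. -/
def mergeA (ε : B →ₐ[k] A) (i : ℕ) (a : ℕ → A) (β : ℕ → ℕ → B) : ℕ → A :=
  fun j => if j < i then a j else if j = i then a i * a (i + 1) * ε (β i (i + 1)) else a (j + 1)

/-- Preimages of the index `p` under the monotone surjection collapsing `i` and `i+1`. -/
def preim (i p : ℕ) : Finset ℕ :=
  if p < i then {p} else if p = i then {i, i + 1} else {p + 1}

/-- The `B`-entries of the matrix obtained by merging rows/columns `i` and `i+1`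
(products of the corresponding old entries). -/
def mergeB (i : ℕ) (β : ℕ → ℕ → B) : ℕ → ℕ → B :=
  fun p q => ∏ u ∈ preim i p, ∏ v ∈ preim i q, β u v


/-!
On a generator with diagonal `a` and upper entries `β`, the coboundary is the alternating sum
`δ = ∑ⱼ (-1)ʲ dⱼ` of faces: `d₀` drops the first row and column and multiplies on the left by
`a₀ ε(b₀₁ ⋯ b₀ₙ)`, `dₙ₊₁` drops the last ones and multiplies on the right by
`aₙ ε(b₀ₙ ⋯ bₙ₋₁,ₙ)`, and `dⱼ₊₁` merges rows and columns `j` and `j + 1`. These faces satisfy the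
cosimplicial identities: in `δ ∘ δ` the term of the faces `(i, j)` equals the term of `(j + 1, i)`
for `i ≤ j`. For merges this is the associativity of merging, seen on the fibres of the
codegeneracies; the `ε`-factors are moved into place using that `ε(B)` is central and that `M` is
`B`-symmetric. The terms then cancel in pairs, and pure tensors span the tensor space.
-/

open Finset

lemma prod_Icc_one_eq_prod_range {M : Type*} [CommMonoid M] (m : ℕ) (g : ℕ → M) :
    ∏ j ∈ Icc 1 m, g j = ∏ j ∈ range m, g (j + 1) := by
  rw [← Ico_add_one_right_eq_Icc, prod_Ico_eq_prod_range, Nat.add_sub_cancel]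
  simp only [add_comm]

lemma sum_range_sum_range_neg_one_pow_smul_eq_zero {M : Type*} [AddCommGroup M] (N : ℕ)
    (G : ℕ → ℕ → M) (hG : ∀ i j, i ≤ j → j ≤ N → G i j = G (j + 1) i) :
    ∑ j ∈ range (N + 1), ∑ i ∈ range (N + 2), (-1 : ℤ) ^ (j + i) • G i j = 0 := by
  rw [← sum_product']
  refine sum_involution (fun p _ => if p.2 ≤ p.1 then (p.2, p.1 + 1) else (p.2 - 1, p.1))
    ?_ ?_ ?_ ?_
  · rintro ⟨j, i⟩ hp
    simp only [mem_product, mem_range] at hp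
    dsimp only
    split_ifs with h
    · rw [hG i j h (by omega), show i + (j + 1) = j + i + 1 by omega, pow_succ, mul_neg_one,
        neg_smul, add_neg_cancel]
    · rw [hG j (i - 1) (by omega) (by omega), Nat.sub_add_cancel (by omega),
        show j + i = i - 1 + j + 1 by omega, pow_succ, mul_neg_one, neg_smul, neg_add_cancel]
  · rintro ⟨j, i⟩ _ _
    dsimp only
    split_ifs <;> simp only [ne_eq, Prod.mk.injEq] <;> omega
  · rintro ⟨j, i⟩ hp
    simp only [mem_product, mem_range] at hp ⊢
    split_ifs <;> omega
  · rintro ⟨j, i⟩ _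
    by_cases h : i ≤ j
    · rw [if_pos h, if_neg (by omega), Nat.add_sub_cancel]
    · rw [if_neg h, if_pos (by omega), Nat.sub_add_cancel (by omega)]

lemma mem_preim {i p x : ℕ} :
    x ∈ preim i p ↔ (p < i ∧ x = p) ∨ (p = i ∧ (x = i ∨ x = i + 1)) ∨ (i < p ∧ x = p + 1) := by
  unfold preim
  split_ifs <;> simp <;> omega

lemma pairwiseDisjoint_preim (i : ℕ) (s : Set ℕ) : s.PairwiseDisjoint (preim i) := by
  intro u _ v _ huv
  simp only [Function.onFun, Finset.disjoint_left, mem_preim]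
  omega

lemma prod_preim {M : Type*} [CommMonoid M] (i p : ℕ) (g : ℕ → M) :
    ∏ u ∈ preim i p, g u =
      if p < i then g p else if p = i then g i * g (i + 1) else g (p + 1) := by
  unfold preim
  split_ifs <;> simp

lemma biUnion_preim_Ico {l i m : ℕ} (hl : l ≤ i) (hm : i < m) :
    (Ico l m).biUnion (preim i) = Ico l (m + 1) := by
  ext x
  simp only [mem_biUnion, mem_Ico, mem_preim]
  constructor
  · rintro ⟨u, hu, hx⟩
    omega
  · intro hx
    exact ⟨if x ≤ i then x else x - 1, by split_ifs <;> omega, by split_ifs <;> omega⟩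

lemma prod_prod_preim_Ico {M : Type*} [CommMonoid M] {l i m : ℕ} (hl : l ≤ i) (hm : i < m)
    (g : ℕ → M) : ∏ u ∈ Ico l m, ∏ v ∈ preim i u, g v = ∏ v ∈ Ico l (m + 1), g v := by
  rw [← prod_biUnion (pairwiseDisjoint_preim i _), biUnion_preim_Ico hl hm]

/-- The identity `σ_q ∘ σ_p = σ_p ∘ σ_(q+1)` (`p ≤ q`) for the maps `σᵢ` collapsing `i` and `i + 1`,
read on fibres. -/
lemma biUnion_preim_preim {p q : ℕ} (h : p ≤ q) (r : ℕ) :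
    (preim q r).biUnion (preim p) = (preim p r).biUnion (preim (q + 1)) := by
  ext x
  simp only [mem_biUnion, mem_preim]
  constructor
  · rintro ⟨u, hu, hx⟩
    refine ⟨if r < p then r else if r = p then min x (p + 1) else r + 1, ?_, ?_⟩ <;>
      split_ifs <;> omega
  · rintro ⟨u, hu, hx⟩
    refine ⟨if r < p then r else if r = p then (if x ≤ p + 1 then p else p + 1)
      else if r < q then r else if r = q then x - 1 else r + 1, ?_, ?_⟩ <;>
      split_ifs <;> omega

def shift {α : Type*} (a : ℕ → α) : ℕ → α := fun j => a (j + 1)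

def shift₂ {α : Type*} (β : ℕ → ℕ → α) : ℕ → ℕ → α := fun p q => β (p + 1) (q + 1)

section MergeB

variable {B : Type} [CommRing B]

lemma mergeB_apply (i : ℕ) (β : ℕ → ℕ → B) (p q : ℕ) :
    mergeB B i β p q = ∏ u ∈ preim i p, ∏ v ∈ preim i q, β u v := rfl

lemma mergeB_mergeB {p q : ℕ} (h : p ≤ q) (β : ℕ → ℕ → B) :
    mergeB B q (mergeB B p β) = mergeB B p (mergeB B (q + 1) β) := by
  have merge_twice : ∀ i j (γ : ℕ → ℕ → B) u v, mergeB B i (mergeB B j γ) u v =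
      ∏ x ∈ (preim i u).biUnion (preim j), ∏ y ∈ (preim i v).biUnion (preim j), γ x y := by
    intro i j γ u v
    simp only [mergeB_apply, prod_biUnion (pairwiseDisjoint_preim _ _)]
    exact prod_congr rfl fun x _ => prod_comm
  funext u v
  rw [merge_twice, merge_twice, biUnion_preim_preim h, biUnion_preim_preim h]

lemma shift₂_mergeB_succ (i : ℕ) (β : ℕ → ℕ → B) :
    shift₂ (mergeB B (i + 1) β) = mergeB B i (shift₂ β) := by
  funext p q
  simp only [shift₂, mergeB_apply, prod_preim, Nat.add_lt_add_iff_right,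
    Nat.add_right_cancel_iff]

lemma shift₂_mergeB_zero (β : ℕ → ℕ → B) : shift₂ (mergeB B 0 β) = shift₂ (shift₂ β) := by
  funext p q
  simp (disch := omega) only [shift₂, mergeB_apply, prod_preim, if_neg]

end MergeB

section MergeA

variable {k A B : Type} [Field k] [Ring A] [Algebra k A] [CommRing B] [Algebra k B]
  (ε : B →ₐ[k] A)

lemma mergeA_of_lt {i j : ℕ} (h : j < i) (a : ℕ → A) (β : ℕ → ℕ → B) :
    mergeA k A B ε i a β j = a j := if_pos h

lemma mergeA_self (i : ℕ) (a : ℕ → A) (β : ℕ → ℕ → B) :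
    mergeA k A B ε i a β i = a i * a (i + 1) * ε (β i (i + 1)) := by
  simp [mergeA]

lemma mergeA_mergeA (hcent : ∀ (b : B) (x : A), ε b * x = x * ε b) {p q : ℕ} (h : p ≤ q)
    (a : ℕ → A) (β : ℕ → ℕ → B) :
    mergeA k A B ε q (mergeA k A B ε p a β) (mergeB B p β)
      = mergeA k A B ε p (mergeA k A B ε (q + 1) a β) (mergeB B (q + 1) β) := by
  funext j
  rcases lt_trichotomy j p with hjp | rfl | hjp <;>
    rcases lt_trichotomy j q with hjq | rfl | hjq <;>
    simp (disch := omega) only [mergeA, mergeB_apply, prod_preim, if_pos, if_neg, if_true]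
  rw [(show Commute (ε (β j (j + 1))) (a (j + 1 + 1)) from hcent _ _).right_comm,
    mul_assoc _ (ε _), ← map_mul, ← mul_assoc (a j), ← mul_assoc (a j), mul_assoc _ (ε _),
    ← map_mul]
  congr 2
  ring

lemma shift_mergeA_succ (i : ℕ) (a : ℕ → A) (β : ℕ → ℕ → B) :
    shift (mergeA k A B ε (i + 1) a β) = mergeA k A B ε i (shift a) (shift₂ β) := by
  funext j
  simp only [shift, shift₂, mergeA, Nat.add_lt_add_iff_right, Nat.add_right_cancel_iff]

lemma shift_mergeA_zero (a : ℕ → A) (β : ℕ → ℕ → B) :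
    shift (mergeA k A B ε 0 a β) = shift (shift a) := by
  funext j
  simp (disch := omega) only [shift, mergeA, if_neg]

end MergeA

/-- A `k`-linear cochain of degree `m` is determined by its values on the generators
`gen k A B m a β`, so it is modelled by a function of the matrix entries that only looks at the
indices below `m`. -/
abbrev MatrixFun (A B M : Type) : Type := (ℕ → A) → (ℕ → ℕ → B) → M

def DependsBelow {A B M : Type} (m : ℕ) (F : MatrixFun A B M) : Prop :=
  ∀ a a' β β', (∀ j < m, a j = a' j) → (∀ p q, p < q → q < m → β p q = β' p q) →
    F a β = F a' β'

section Faces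

variable {k A B : Type} [Field k] [Ring A] [Algebra k A] [CommRing B] [Algebra k B]
  (ε : B →ₐ[k] A) {M : Type} [AddCommGroup M] [DistribMulAction A M] [DistribMulAction Aᵐᵒᵖ M]

def leftCoeff (m : ℕ) (a : ℕ → A) (β : ℕ → ℕ → B) : A :=
  a 0 * ε (∏ j ∈ Icc 1 m, β 0 j)

def rightCoeff (m : ℕ) (a : ℕ → A) (β : ℕ → ℕ → B) : A :=
  a m * ε (∏ j ∈ range m, β j m)

/-- The faces from degree `m` to degree `m + 1`: `face m (j + 1)` merges rows and columns `j` and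
`j + 1` for `j < m`, and `face m (m + 1)` is the right outer face. -/
def face (m : ℕ) : ℕ → (MatrixFun A B M →+ MatrixFun A B M)
  | 0 => AddMonoidHom.mk' (fun F a β => leftCoeff ε m a β • F (shift a) (shift₂ β))
      fun F G => by funext a β; exact smul_add ..
  | j + 1 => AddMonoidHom.mk'
      (fun F a β => if j < m then F (mergeA k A B ε j a β) (mergeB B j β)
        else op (rightCoeff ε m a β) • F a β)
      fun F G => by funext a β; split_ifs <;> simp only [Pi.add_apply, smul_add]

def coboundary (m : ℕ) : MatrixFun A B M →+ MatrixFun A B M :=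
  ∑ j ∈ range (m + 2), (-1 : ℤ) ^ j • face ε m j

variable {ε}

lemma face_zero_apply (m : ℕ) (F : MatrixFun A B M) (a : ℕ → A) (β : ℕ → ℕ → B) :
    face ε m 0 F a β = leftCoeff ε m a β • F (shift a) (shift₂ β) := rfl

lemma face_succ_apply {m j : ℕ} (h : j < m) (F : MatrixFun A B M) (a : ℕ → A)
    (β : ℕ → ℕ → B) : face ε m (j + 1) F a β = F (mergeA k A B ε j a β) (mergeB B j β) :=
  if_pos h

lemma face_last_apply (m : ℕ) (F : MatrixFun A B M) (a : ℕ → A) (β : ℕ → ℕ → B) :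
    face ε m (m + 1) F a β = op (rightCoeff ε m a β) • F a β :=
  if_neg (lt_irrefl m)

lemma coboundary_apply (m : ℕ) (F : MatrixFun A B M) (a : ℕ → A) (β : ℕ → ℕ → B) :
    coboundary ε m F a β = leftCoeff ε m a β • F (shift a) (shift₂ β)
      + ∑ i ∈ range m, (-1 : ℤ) ^ (i + 1) • F (mergeA k A B ε i a β) (mergeB B i β)
      + (-1 : ℤ) ^ (m + 1) • op (rightCoeff ε m a β) • F a β := by
  simp only [coboundary, AddMonoidHom.finsetSum_apply, AddMonoidHom.smul_apply, Finset.sum_apply,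
    Pi.smul_apply]
  rw [sum_range_succ, sum_range_succ', face_last_apply, face_zero_apply, pow_zero, one_smul,
    sum_congr rfl fun i hi => by rw [face_succ_apply (mem_range.1 hi)]]
  abel

end Faces

section Coefficients

variable {k A B : Type} [Field k] [Ring A] [Algebra k A] [CommRing B] [Algebra k B]
  {ε : B →ₐ[k] A}

lemma mul_map_mul_mul_map (hcent : ∀ (b : B) (x : A), ε b * x = x * ε b) (x y : A) (b c : B) :
    x * ε b * (y * ε c) = x * y * ε (b * c) := by
  rw [← mul_assoc, (show Commute (ε b) y from hcent b y).right_comm, mul_assoc, ← map_mul]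

lemma leftCoeff_mul_leftCoeff_shift (hcent : ∀ (b : B) (x : A), ε b * x = x * ε b) (n : ℕ)
    (a : ℕ → A) (β : ℕ → ℕ → B) :
    leftCoeff ε (n + 1) a β * leftCoeff ε n (shift a) (shift₂ β)
      = leftCoeff ε n (mergeA k A B ε 0 a β) (mergeB B 0 β) := by
  have merged_row : ∀ q ∈ range n, mergeB B 0 β 0 (q + 1) = β 0 (q + 2) * β 1 (q + 2) := by
    intro q _
    simp (disch := omega) only [mergeB_apply, prod_preim, if_neg, reduceIte, zero_add]
  simp only [leftCoeff, shift, shift₂, prod_Icc_one_eq_prod_range, mul_map_mul_mul_map hcent]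
  rw [prod_congr rfl merged_row, prod_mul_distrib, prod_range_succ', mergeA_self,
    mul_assoc _ (ε _), ← map_mul]
  ring_nf

lemma leftCoeff_mergeA {j n : ℕ} (h : j < n) (a : ℕ → A) (β : ℕ → ℕ → B) :
    leftCoeff ε n (mergeA k A B ε (j + 1) a β) (mergeB B (j + 1) β) = leftCoeff ε (n + 1) a β := by
  simp (disch := omega) only [leftCoeff, ← Ico_add_one_right_eq_Icc, mergeA, mergeB_apply,
    prod_preim (j + 1) 0, if_pos]
  rw [prod_prod_preim_Ico (by omega) (by omega)]

lemma rightCoeff_mergeA {p n : ℕ} (h : p < n) (a : ℕ → A) (β : ℕ → ℕ → B) :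
    rightCoeff ε n (mergeA k A B ε p a β) (mergeB B p β) = rightCoeff ε (n + 1) a β := by
  simp (disch := omega) only [rightCoeff, range_eq_Ico, mergeA, mergeB_apply, prod_preim p n,
    if_neg]
  rw [prod_prod_preim_Ico (Nat.zero_le p) h]

lemma rightCoeff_mergeA_self (hcent : ∀ (b : B) (x : A), ε b * x = x * ε b) (n : ℕ)
    (a : ℕ → A) (β : ℕ → ℕ → B) :
    rightCoeff ε n (mergeA k A B ε n a β) (mergeB B n β)
      = rightCoeff ε n a β * rightCoeff ε (n + 1) a β := by
  have merged_col : ∀ q ∈ range n, mergeB B n β q n = β q n * β q (n + 1) := by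
    intro q hq
    rw [mem_range] at hq
    simp (disch := omega) only [mergeB_apply, prod_preim, if_pos, if_neg, reduceIte]
  simp only [rightCoeff, mul_map_mul_mul_map hcent]
  rw [prod_congr rfl merged_col, prod_mul_distrib, prod_range_succ, mergeA_self,
    mul_assoc _ (ε _), ← map_mul]
  ring_nf

variable {M : Type} [AddCommGroup M] [DistribMulAction A M] [DistribMulAction Aᵐᵒᵖ M]
  [SMulCommClass A Aᵐᵒᵖ M]

/-- The entry `b₀,ₙ₊₁` contributes `ε(b₀,ₙ₊₁)` to the left coefficient on one side and to the
right coefficient on the other. -/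
lemma leftCoeff_smul_op_rightCoeff_smul (hcent : ∀ (b : B) (x : A), ε b * x = x * ε b)
    (hsym : ∀ (b : B) (m : M), (ε b) • m = (op (ε b)) • m) (n : ℕ) (a : ℕ → A)
    (β : ℕ → ℕ → B) (v : M) :
    leftCoeff ε (n + 1) a β • op (rightCoeff ε n (shift a) (shift₂ β)) • v
      = op (rightCoeff ε (n + 1) a β) • leftCoeff ε n a β • v := by
  have hL : leftCoeff ε (n + 1) a β = leftCoeff ε n a β * ε (β 0 (n + 1)) := by
    rw [leftCoeff, prod_Icc_succ_top (by omega), map_mul, ← mul_assoc, leftCoeff]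
  have hR : rightCoeff ε (n + 1) a β = rightCoeff ε n (shift a) (shift₂ β) * ε (β 0 (n + 1)) := by
    rw [rightCoeff, prod_range_succ', map_mul, ← mul_assoc]
    rfl
  rw [hL, hR, mul_smul, smul_comm (ε _) (op _) v, hsym, ← mul_smul (op _), ← op_mul, hcent,
    smul_comm]

end Coefficients

section CosimplicialIdentities

variable {k A B : Type} [Field k] [Ring A] [Algebra k A] [CommRing B] [Algebra k B]
  {ε : B →ₐ[k] A} {M : Type} [AddCommGroup M] [DistribMulAction A M] [DistribMulAction Aᵐᵒᵖ M]
  (F : MatrixFun A B M) (a : ℕ → A) (β : ℕ → ℕ → B)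

lemma face_zero_face_zero (hcent : ∀ (b : B) (x : A), ε b * x = x * ε b) (n : ℕ) :
    face ε (n + 1) 0 (face ε n 0 F) a β = face ε (n + 1) 1 (face ε n 0 F) a β := by
  rw [face_zero_apply, face_succ_apply n.succ_pos, face_zero_apply, face_zero_apply,
    shift_mergeA_zero, shift₂_mergeB_zero, ← leftCoeff_mul_leftCoeff_shift hcent, mul_smul]

lemma face_zero_face_succ {j n : ℕ} (h : j < n) :
    face ε (n + 1) 0 (face ε n (j + 1) F) a β = face ε (n + 1) (j + 2) (face ε n 0 F) a β := by
  rw [face_zero_apply, face_succ_apply h, face_succ_apply (by omega), face_zero_apply,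
    shift_mergeA_succ, shift₂_mergeB_succ, leftCoeff_mergeA h]

lemma face_zero_face_last [SMulCommClass A Aᵐᵒᵖ M]
    (hcent : ∀ (b : B) (x : A), ε b * x = x * ε b)
    (hsym : ∀ (b : B) (m : M), (ε b) • m = (op (ε b)) • m) (n : ℕ) :
    face ε (n + 1) 0 (face ε n (n + 1) F) a β
      = face ε (n + 1) (n + 2) (face ε n 0 F) a β := by
  rw [face_zero_apply, face_last_apply, face_last_apply, face_zero_apply,
    leftCoeff_smul_op_rightCoeff_smul hcent hsym]

lemma face_succ_face_succ (hcent : ∀ (b : B) (x : A), ε b * x = x * ε b) {p q n : ℕ}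
    (hpq : p ≤ q) (hq : q < n) :
    face ε (n + 1) (p + 1) (face ε n (q + 1) F) a β
      = face ε (n + 1) (q + 2) (face ε n (p + 1) F) a β := by
  rw [face_succ_apply (by omega), face_succ_apply hq, face_succ_apply (by omega),
    face_succ_apply (by omega), mergeA_mergeA ε hcent hpq, mergeB_mergeB hpq]

lemma face_succ_face_last {p n : ℕ} (h : p < n) :
    face ε (n + 1) (p + 1) (face ε n (n + 1) F) a β
      = face ε (n + 1) (n + 2) (face ε n (p + 1) F) a β := by
  rw [face_succ_apply (by omega), face_last_apply, face_last_apply, face_succ_apply h,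
    rightCoeff_mergeA h]

lemma face_last_face_last (hcent : ∀ (b : B) (x : A), ε b * x = x * ε b) {n : ℕ}
    (hF : DependsBelow n F) :
    face ε (n + 1) (n + 1) (face ε n (n + 1) F) a β
      = face ε (n + 1) (n + 2) (face ε n (n + 1) F) a β := by
  have merge_invisible : F (mergeA k A B ε n a β) (mergeB B n β) = F a β :=
    hF _ _ _ _ (fun j hj => mergeA_of_lt ε hj a β) fun p q hpq hq => by
      simp (disch := omega) only [mergeB_apply, prod_preim, if_pos]
  rw [face_succ_apply (lt_add_one n), face_last_apply, face_last_apply, face_last_apply,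
    rightCoeff_mergeA_self hcent, op_mul, mul_smul, merge_invisible]

variable [SMulCommClass A Aᵐᵒᵖ M] {F}

lemma face_face (hcent : ∀ (b : B) (x : A), ε b * x = x * ε b)
    (hsym : ∀ (b : B) (m : M), (ε b) • m = (op (ε b)) • m) {n : ℕ} (hF : DependsBelow n F)
    {i j : ℕ} (hij : i ≤ j) (hj : j ≤ n + 1) :
    face ε (n + 1) i (face ε n j F) a β = face ε (n + 1) (j + 1) (face ε n i F) a β := by
  rcases i with _ | p <;> rcases j with _ | q
  · exact face_zero_face_zero F a β hcent n
  · rcases Nat.lt_or_ge q n with hq | hq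
    · exact face_zero_face_succ F a β hq
    · obtain rfl : n = q := by omega
      exact face_zero_face_last F a β hcent hsym n
  · omega
  · rcases Nat.lt_or_ge q n with hq | hq
    · exact face_succ_face_succ F a β hcent (by omega) hq
    · obtain rfl : n = q := by omega
      rcases Nat.lt_or_ge p n with hp | hp
      · exact face_succ_face_last F a β hp
      · obtain rfl : n = p := by omega
        exact face_last_face_last F a β hcent hF

theorem coboundary_coboundary (hcent : ∀ (b : B) (x : A), ε b * x = x * ε b)
    (hsym : ∀ (b : B) (m : M), (ε b) • m = (op (ε b)) • m) {n : ℕ} (hF : DependsBelow n F) :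
    coboundary ε (n + 1) (coboundary ε n F) = 0 := by
  funext a β
  simp only [coboundary, map_sum, map_zsmul, AddMonoidHom.finsetSum_apply,
    AddMonoidHom.smul_apply, Finset.sum_apply, Pi.smul_apply, smul_sum, smul_smul, ← pow_add,
    Pi.zero_apply]
  exact sum_range_sum_range_neg_one_pow_smul_eq_zero (n + 1) _
    fun i j hij hj => face_face a β hcent hsym hF hij hj

end CosimplicialIdentities

section Generators

variable {k A B : Type} [Field k] [Ring A] [Algebra k A] [CommRing B] [Algebra k B]

lemma gen_congr {m : ℕ} {a a' : ℕ → A} {β β' : ℕ → ℕ → B} (ha : ∀ j < m, a j = a' j)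
    (hβ : ∀ p q, p < q → q < m → β p q = β' p q) : gen k A B m a β = gen k A B m a' β' := by
  unfold gen
  congr 2
  · exact funext fun i => ha i i.2
  · exact funext fun p => hβ _ _ p.2 p.1.2.2

lemma linearMap_ext_gen {N : Type} [AddCommGroup N] [Module k N] {m : ℕ}
    {φ ψ : TS k A B m →ₗ[k] N} (h : ∀ a β, φ (gen k A B m a β) = ψ (gen k A B m a β)) :
    φ = ψ := by
  refine TensorProduct.ext (PiTensorProduct.ext (MultilinearMap.ext fun g =>
    PiTensorProduct.ext (MultilinearMap.ext fun g' => ?_)))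
  obtain ⟨a, rfl⟩ : ∃ a : ℕ → A, (fun i : Fin m => a i) = g :=
    ⟨Function.extend Fin.val g 1, funext fun i => Fin.val_injective.extend_apply g 1 i⟩
  have entries_injective : Function.Injective fun p : UT m => ((p.1.1 : ℕ), (p.1.2 : ℕ)) :=
    fun p q hpq => Subtype.ext (Prod.ext (Fin.ext (congrArg Prod.fst hpq))
      (Fin.ext (congrArg Prod.snd hpq)))
  obtain ⟨β, rfl⟩ : ∃ β : ℕ → ℕ → B, (fun p : UT m => β p.1.1 p.1.2) = g' :=
    ⟨fun u v => Function.extend (fun p : UT m => ((p.1.1 : ℕ), (p.1.2 : ℕ))) g' 1 (u, v),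
      funext fun p => entries_injective.extend_apply g' 1 p⟩
  exact h a β

end Generators

theorem secondary_hochschild_coboundary_squares_to_zero
    (M : Type) [AddCommGroup M] [Module k M] [Module A M] [Module Aᵐᵒᵖ M]
    [SMulCommClass A Aᵐᵒᵖ M]
    (ε : B →ₐ[k] A)
    (hcent : ∀ (b : B) (a : A), ε b * a = a * ε b)
    (hsym : ∀ (b : B) (m : M), (ε b) • m = (op (ε b)) • m)
    (δ : ∀ n : ℕ, (TS k A B n →ₗ[k] M) → (TS k A B (n + 1) →ₗ[k] M))
    (hδ : ∀ (n : ℕ) (f : TS k A B n →ₗ[k] M) (a : ℕ → A) (β : ℕ → ℕ → B),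
      δ n f (gen k A B (n + 1) a β) =
        (a 0 * ε (∏ j ∈ Finset.Icc 1 n, β 0 j)) •
            f (gen k A B n (fun j => a (j + 1)) (fun p q => β (p + 1) (q + 1)))
        + (∑ i ∈ Finset.range n, (-1 : ℤ) ^ (i + 1) •
            f (gen k A B n (mergeA k A B ε i a β) (mergeB B i β)))
        + (-1 : ℤ) ^ (n + 1) •
            (op (a n * ε (∏ j ∈ Finset.range n, β j n)) • f (gen k A B n a β))) :
    ∀ (n : ℕ) (f : TS k A B n →ₗ[k] M), δ (n + 1) (δ n f) = 0 := by
  have δ_gen_eq_coboundary : ∀ m (g : TS k A B m →ₗ[k] M),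
      (fun a β => δ m g (gen k A B (m + 1) a β))
        = coboundary ε m fun a β => g (gen k A B m a β) :=
    fun m g => funext₂ fun a β => (hδ m g a β).trans
      (coboundary_apply (ε := ε) m (fun a β => g (gen k A B m a β)) a β).symm
  intro n f
  have hf : DependsBelow n fun a β => f (gen k A B n a β) :=
    fun _ _ _ _ ha hβ => congrArg f (gen_congr ha hβ)
  refine linearMap_ext_gen fun a β => ?_
  calc δ (n + 1) (δ n f) (gen k A B (n + 2) a β)
      = coboundary ε (n + 1) (fun a β => δ n f (gen k A B (n + 1) a β)) a β :=
        congrFun₂ (δ_gen_eq_coboundary (n + 1) (δ n f)) a β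
    _ = coboundary ε (n + 1) (coboundary ε n fun a β => f (gen k A B n a β)) a β := by
        rw [δ_gen_eq_coboundary]
    _ = 0 := by rw [coboundary_coboundary hcent hsym hf, Pi.zero_apply, Pi.zero_apply]

end
end

section
/- On the secondary Hochschild complex C^•(A,B,ε), with λ the signed cyclic operator, N = 1 + λ + ⋯ + λ^n, b the full differential and b' the truncated differential, the identities N(1 − λ) = (1 − λ)N = 0 and b ∘ N = N ∘ b' hold. -/
open scoped TensorProduct
open MulOpposite PiTensorProduct

noncomputable section

variable (k A B : Type) [Field k] [Ring A] [Algebra k A] [CommRing B] [Algebra k B]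

/-- The secondary Hochschild cochain space `C^n(A,B,ε) = Hom_k(A^{⊗(n+1)} ⊗ B^{⊗ n(n+1)/2}, k)`. -/
abbrev Cc (n : ℕ) : Type := TS k A B (n + 1) →ₗ[k] k

/-- Diagonal of the "cyclic merge": `a_m a_0 ε(b_{0,m})` in position `0`
(top index `m`). -/
def cmergeA (ε : B →ₐ[k] A) (m : ℕ) (a : ℕ → A) (β : ℕ → ℕ → B) : ℕ → A :=
  fun j => if j = 0 then a m * a 0 * ε (β 0 m) else a j

/-- `B`-entries of the cyclic merge: first row becomes `b_{q,m} b_{0,q}`. -/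
def cmergeB (m : ℕ) (β : ℕ → ℕ → B) : ℕ → ℕ → B :=
  fun p q => if p = 0 then β q m * β 0 q else β p q

/-- Diagonal of the cyclically rotated matrix: `a_n` moves to position `0`. -/
def rotA (n : ℕ) (a : ℕ → A) : ℕ → A :=
  fun j => if j = 0 then a n else a (j - 1)

/-- `B`-entries of the cyclically rotated matrix: the first row becomes
`b_{0,n}, …, b_{n-1,n}`. -/
def rotB (n : ℕ) (β : ℕ → ℕ → B) : ℕ → ℕ → B :=
  fun p q => if p = 0 then β (q - 1) n else β (p - 1) (q - 1)

/-!
Write `t` for the rotation of the matrix entries and `d_0, …, d_{n+1}` for the faces, `d_{n+1}`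
the cyclic one. Rotating `n + 1` times is the identity and `(-1)^{n(n+1)} = 1`, so `λ^{n+1} = 1`;
then `N(1 - λ)` and `(1 - λ)N` both equal `1 - λ^{n+1} = 0` by the geometric sum.

For `b N = N b'` evaluate both sides on a generator: the right side is a signed sum of terms
`φ(d_i t^j x)`, the left side one of terms `φ(t^j d_i x)`, including `i = n + 1`. The identities
`d_{i+1} t = t d_i` (`i < n`), `d_0 t = d_{n+1}` and `d_{n+1} t = t d_n` iterate to
`d_{j+i} t^j = t^j d_i`, `d_j t^{j+1} = t^j d_{n+1}` and `d_i t^{j+1} = t^j d_{n+1-j+i}` (`i < j`),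
which match the two families of terms bijectively, with sign exponents equal modulo 2.
-/

theorem neg_one_pow_add_two_mul {R : Type*} [Monoid R] [HasDistribNeg R] (a c : ℕ) :
    (-1 : R) ^ (a + 2 * c) = (-1) ^ a := by
  rw [pow_add, pow_mul, neg_one_sq, one_pow, mul_one]

open Finset in
theorem sum_sum_add_eq_sum_sum_of_reindex {M : Type*} [AddCommMonoid M] (n : ℕ)
    (s t : ℕ → ℕ → M) (c : ℕ → M)
    (h_low : ∀ j i, j + i ≤ n → t j (j + i) = s j i)
    (h_diag : ∀ j ≤ n, t (j + 1) j = c j)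
    (h_wrap : ∀ j i, i < j → j ≤ n → t (j + 1) i = s j (n + 1 - j + i)) :
    ∑ j ∈ range (n + 1), (∑ i ∈ range (n + 1), s j i + c j) =
      ∑ j ∈ range (n + 2), ∑ i ∈ range (n + 1), t j i := by
  set U : ℕ → M := fun j => ∑ i ∈ range (n + 1 - j), s j i
  set V : ℕ → M := fun j => ∑ i ∈ range j, s j (n + 1 - j + i)
  have h_row : ∀ j ≤ n, ∑ i ∈ range (n + 1), s j i = U j + V j := fun j hj => by
    rw [show n + 1 = n + 1 - j + j by omega, sum_range_add]
  have h_head : ∀ j ≤ n + 1, ∑ i ∈ range (n + 1 - j), t j (j + i) = U j := fun j hj =>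
    sum_congr rfl fun i hi => h_low j i (by rw [mem_range] at hi; omega)
  have h_shift :
      ∀ j ≤ n, ∑ i ∈ range (n + 1), t (j + 1) i = V j + c j + U (j + 1) := fun j hj => by
    rw [show n + 1 = j + 1 + (n + 1 - (j + 1)) by omega, sum_range_add, sum_range_succ,
      h_head (j + 1) (by omega), h_diag j hj]
    congr 2
    exact sum_congr rfl fun i hi => h_wrap j i (mem_range.mp hi) hj
  have h_U : ∑ j ∈ range (n + 1), U (j + 1) + U 0 = ∑ j ∈ range (n + 1), U j := by
    rw [← sum_range_succ', sum_range_succ, show U (n + 1) = 0 by simp [U], add_zero]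
  have h_t0 : ∑ i ∈ range (n + 1), t 0 i = U 0 := by simpa using h_head 0 (by omega)
  rw [sum_range_succ' _ (n + 1), h_t0,
    sum_congr rfl fun j hj => h_shift j (Nat.lt_succ_iff.mp (mem_range.mp hj)),
    sum_congr rfl fun j hj => congrArg (· + c j) (h_row j (Nat.lt_succ_iff.mp (mem_range.mp hj)))]
  simp only [sum_add_distrib]
  rw [← h_U]
  abel

theorem preim_of_lt {i p : ℕ} (h : p < i) : preim i p = {p} := if_pos h

theorem preim_self (i : ℕ) : preim i i = {i, i + 1} := by simp [preim]

theorem preim_of_gt {i p : ℕ} (h : i < p) : preim i p = {p + 1} := by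
  simp [preim, h.ne', h.not_gt]

theorem preim_succ_succ (i p : ℕ) :
    preim (i + 1) (p + 1) = (preim i p).map (addRightEmbedding 1) := by
  unfold preim
  split_ifs <;> first | omega | simp

abbrev Entries (A B : Type) : Type := (ℕ → A) × (ℕ → ℕ → B)

namespace Entries

section Rotation

variable {R S : Type}

def rot (n : ℕ) : Entries R S → Entries R S := Prod.map (rotA R n) (rotB S n)

/-- Agreement at the entries that `gen m` reads. The face and rotation identities hold only
there, so they are stated up to this relation rather than as equalities. -/
def AgreeBelow (m : ℕ) (x y : Entries R S) : Prop :=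
  (∀ i < m, x.1 i = y.1 i) ∧ ∀ p q, p < q → q < m → x.2 p q = y.2 p q

theorem AgreeBelow.refl (m : ℕ) (x : Entries R S) : AgreeBelow m x x :=
  ⟨fun _ _ => rfl, fun _ _ _ _ => rfl⟩

theorem AgreeBelow.trans {m : ℕ} {x y z : Entries R S} (hxy : AgreeBelow m x y)
    (hyz : AgreeBelow m y z) : AgreeBelow m x z :=
  ⟨fun i hi => (hxy.1 i hi).trans (hyz.1 i hi),
    fun p q hpq hq => (hxy.2 p q hpq hq).trans (hyz.2 p q hpq hq)⟩

theorem AgreeBelow.rot {n : ℕ} {x y : Entries R S} (h : AgreeBelow (n + 1) x y) :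
    AgreeBelow (n + 1) (x.rot n) (y.rot n) := by
  refine ⟨fun i hi => ?_, fun p q hpq hq => ?_⟩
  · simp only [Entries.rot, Prod.map_fst, rotA]
    split_ifs
    exacts [h.1 n (by omega), h.1 (i - 1) (by omega)]
  · simp only [Entries.rot, Prod.map_snd, rotB]
    split_ifs
    exacts [h.2 _ _ (by omega) (by omega), h.2 _ _ (by omega) (by omega)]

theorem AgreeBelow.iterate_rot {n : ℕ} {x y : Entries R S} (h : AgreeBelow (n + 1) x y)
    (j : ℕ) :
    AgreeBelow (n + 1) ((Entries.rot n)^[j] x) ((Entries.rot n)^[j] y) := by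
  induction j with
  | zero => exact h
  | succ j ih => simpa only [Function.iterate_succ_apply'] using ih.rot

theorem iterate_rotA_apply (n : ℕ) (a : ℕ → R) {j i : ℕ} (hj : j ≤ n + 1) (hi : i ≤ n) :
    (rotA R n)^[j] a i = if i < j then a (i + n + 1 - j) else a (i - j) := by
  induction j generalizing i with
  | zero => simp
  | succ j ih =>
    rw [Function.iterate_succ_apply']
    rcases Nat.eq_zero_or_pos i with rfl | hi0
    · simp only [rotA, if_true]
      rw [ih (by omega) le_rfl, if_neg (by omega), if_pos (by omega)]
      congr 1; omega
    · simp only [rotA, if_neg hi0.ne']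
      rw [ih (by omega) (by omega)]
      split_ifs <;> (congr 1; omega)

theorem iterate_rotB_apply (n : ℕ) (β : ℕ → ℕ → S) {j p q : ℕ} (hj : j ≤ n + 1)
    (hpq : p < q) (hq : q ≤ n) :
    (rotB S n)^[j] β p q =
      if p < j then
        (if q < j then β (p + n + 1 - j) (q + n + 1 - j) else β (q - j) (p + n + 1 - j))
      else β (p - j) (q - j) := by
  induction j generalizing p q with
  | zero => simp
  | succ j ih =>
    rw [Function.iterate_succ_apply']
    rcases Nat.eq_zero_or_pos p with rfl | hp0
    · simp only [rotB, if_true]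
      rw [ih (by omega) (by omega) le_rfl]
      split_ifs <;> (congr 1 <;> omega)
    · simp only [rotB, if_neg hp0.ne']
      rw [ih (by omega) (by omega) (by omega)]
      split_ifs <;> (congr 1 <;> omega)

theorem agreeBelow_iterate_rot_self (n : ℕ) (x : Entries R S) :
    AgreeBelow (n + 1) ((rot n)^[n + 1] x) x := by
  refine ⟨fun i hi => ?_, fun p q hpq hq => ?_⟩
  · rw [rot, Prod.map_iterate, Prod.map_fst,
      iterate_rotA_apply n x.1 le_rfl (Nat.lt_succ_iff.mp hi), if_pos hi]
    exact congrArg x.1 (by omega)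
  · rw [rot, Prod.map_iterate, Prod.map_snd,
      iterate_rotB_apply n x.2 le_rfl hpq (Nat.lt_succ_iff.mp hq), if_pos (by omega), if_pos hq]
    exact congrArg₂ x.2 (by omega) (by omega)

end Rotation

variable {k A B}

variable (k) in
def tensor (m : ℕ) (x : Entries A B) : TS k A B m := gen k A B m x.1 x.2

def face (ε : B →ₐ[k] A) (i : ℕ) (x : Entries A B) : Entries A B :=
  (mergeA k A B ε i x.1 x.2, mergeB B i x.2)

def cyclicFace (ε : B →ₐ[k] A) (m : ℕ) (x : Entries A B) : Entries A B :=
  (cmergeA k A B ε m x.1 x.2, cmergeB B m x.2)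

theorem tensor_congr {m : ℕ} {x y : Entries A B} (h : AgreeBelow m x y) :
    x.tensor k m = y.tensor k m := by
  unfold tensor gen
  congr 2
  exacts [funext fun i => h.1 i i.isLt, funext fun p => h.2 _ _ p.2 p.1.2.isLt]

theorem linearMap_ext {m : ℕ} {ψ χ : TS k A B m →ₗ[k] k}
    (h : ∀ x : Entries A B, ψ (x.tensor k m) = χ (x.tensor k m)) : ψ = χ := by
  refine TensorProduct.ext (PiTensorProduct.ext (MultilinearMap.ext fun f =>
    PiTensorProduct.ext (MultilinearMap.ext fun g => ?_)))
  let x : Entries A B := (fun i => if hi : i < m then f ⟨i, hi⟩ else 0,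
    fun p q =>
      if hpq : p < q ∧ q < m then g ⟨(⟨p, hpq.1.trans hpq.2⟩, ⟨q, hpq.2⟩), hpq.1⟩ else 1)
  have hx : x.tensor k m = tprod k f ⊗ₜ tprod k g := by
    unfold tensor gen
    congr 2
    · exact funext fun i => dif_pos i.isLt
    · exact funext fun p => dif_pos ⟨p.2, p.1.2.isLt⟩
  have hfg := h x
  rwa [hx] at hfg

theorem face_succ_rot (ε : B →ₐ[k] A) {n i : ℕ} (hi : i < n) (x : Entries A B) :
    AgreeBelow (n + 1) (face ε (i + 1) (rot (n + 1) x)) (rot n (face ε i x)) := by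
  obtain ⟨a, β⟩ := x
  refine ⟨fun j hj => ?_, fun p q hpq hq => ?_⟩
  · rcases j with _ | j
    · simp [face, rot, mergeA, rotA, hi.not_gt, hi.ne']
    · simp [face, rot, mergeA, rotA, rotB]
  · obtain ⟨q, rfl⟩ : ∃ q', q = q' + 1 := ⟨q - 1, by omega⟩
    rcases p with _ | p
    · simp [face, rot, mergeB, rotB, preim_of_lt (Nat.succ_pos i), preim_succ_succ,
        preim_of_gt hi]
    · simp [face, rot, mergeB, rotB, preim_succ_succ]

theorem face_zero_rot (ε : B →ₐ[k] A) (n : ℕ) (x : Entries A B) :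
    AgreeBelow (n + 1) (face ε 0 (rot (n + 1) x)) (cyclicFace ε (n + 1) x) := by
  obtain ⟨a, β⟩ := x
  refine ⟨fun j hj => ?_, fun p q hpq hq => ?_⟩
  · rcases j with _ | j
    · simp [face, rot, cyclicFace, mergeA, cmergeA, rotA, rotB]
    · simp [face, rot, cyclicFace, mergeA, cmergeA, rotA]
  · obtain ⟨q, rfl⟩ : ∃ q', q = q' + 1 := ⟨q - 1, by omega⟩
    rcases p with _ | p
    · simp [face, rot, cyclicFace, mergeB, cmergeB, rotB, preim_self, preim_of_gt]
    · simp [face, rot, cyclicFace, mergeB, cmergeB, rotB, preim_of_gt]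

theorem cyclicFace_rot (ε : B →ₐ[k] A) (n : ℕ) (x : Entries A B) :
    AgreeBelow (n + 1) (cyclicFace ε (n + 1) (rot (n + 1) x)) (rot n (face ε n x)) := by
  obtain ⟨a, β⟩ := x
  refine ⟨fun j hj => ?_, fun p q hpq hq => ?_⟩
  · rcases j with _ | j
    · simp [face, rot, cyclicFace, mergeA, cmergeA, rotA, rotB]
    · simp [face, rot, cyclicFace, mergeA, cmergeA, rotA, show j < n by omega]
  · obtain ⟨q, rfl⟩ : ∃ q', q = q' + 1 := ⟨q - 1, by omega⟩
    rcases p with _ | p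
    · simp [face, rot, cyclicFace, mergeB, cmergeB, rotB, preim_self,
        preim_of_lt (show q < n by omega)]
    · simp [face, rot, cyclicFace, mergeB, cmergeB, rotB, preim_of_lt (show q < n by omega),
        preim_of_lt (show p < n by omega)]

theorem face_add_iterate_rot (ε : B →ₐ[k] A) {n i j : ℕ} (h : j + i ≤ n)
    (x : Entries A B) :
    AgreeBelow (n + 1) (face ε (j + i) ((rot (n + 1))^[j] x)) ((rot n)^[j] (face ε i x)) := by
  induction j generalizing i x with
  | zero => simpa only [Function.iterate_zero_apply, zero_add] using .refl _ _
  | succ j ih =>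
    rw [Function.iterate_succ_apply, Function.iterate_succ_apply, add_right_comm]
    exact (ih (by omega) (rot (n + 1) x)).trans ((face_succ_rot ε (by omega) x).iterate_rot j)

theorem face_iterate_rot_succ (ε : B →ₐ[k] A) {n j : ℕ} (h : j ≤ n) (x : Entries A B) :
    AgreeBelow (n + 1) (face ε j ((rot (n + 1))^[j + 1] x))
      ((rot n)^[j] (cyclicFace ε (n + 1) x)) := by
  rw [Function.iterate_succ_apply]
  exact (face_add_iterate_rot ε (i := 0) h _).trans ((face_zero_rot ε n x).iterate_rot j)

theorem face_iterate_rot_of_lt (ε : B →ₐ[k] A) {n i j : ℕ} (hij : i < j) (hj : j ≤ n)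
    (x : Entries A B) :
    AgreeBelow (n + 1) (face ε i ((rot (n + 1))^[j + 1] x))
      ((rot n)^[j] (face ε (n + 1 - j + i) x)) := by
  obtain ⟨m, rfl⟩ : ∃ m, j = i + 1 + m := ⟨j - i - 1, by omega⟩
  have h1 := face_iterate_rot_succ ε (n := n) (j := i) (by omega) ((rot (n + 1))^[m + 1] x)
  have h2 := (cyclicFace_rot ε n ((rot (n + 1))^[m] x)).iterate_rot i
  have h3 :=
    ((face_add_iterate_rot ε (n := n) (j := m) (i := n - m) (by omega) x).rot).iterate_rot i
  rw [← Function.iterate_add_apply, Function.iterate_succ_apply'] at h1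
  rw [Nat.add_sub_cancel' (by omega)] at h3
  rw [show n + 1 - (i + 1 + m) + i = n - m by omega, show i + 1 + m + 1 = i + 1 + (m + 1) by ring,
    Function.iterate_add_apply (rot n), Function.iterate_add_apply (rot n), Function.iterate_one]
  exact h1.trans (h2.trans h3)

end Entries

section Cochains

open Finset Entries

variable {k A B}

def IsSignedCyclicOperator (lam : ∀ n : ℕ, Module.End k (Cc k A B n)) : Prop :=
  ∀ n (φ : Cc k A B n) (x : Entries A B),
    lam n φ (x.tensor k (n + 1)) = (-1 : ℤ) ^ n • φ ((rot n x).tensor k (n + 1))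

-- `n + 1 + 1` rather than `n + 2`, to match `sum_pow_apply` at `n + 1` syntactically.
def IsTruncatedDifferential (ε : B →ₐ[k] A)
    (btr : ∀ n : ℕ, Cc k A B n →ₗ[k] Cc k A B (n + 1)) : Prop :=
  ∀ n (φ : Cc k A B n) (x : Entries A B),
    btr n φ (x.tensor k (n + 1 + 1)) =
      ∑ i ∈ range (n + 1), (-1 : ℤ) ^ i • φ ((face ε i x).tensor k (n + 1))

def IsFullDifferential (ε : B →ₐ[k] A) (b : ∀ n : ℕ, Cc k A B n →ₗ[k] Cc k A B (n + 1)) :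
    Prop :=
  ∀ n (φ : Cc k A B n) (x : Entries A B),
    b n φ (x.tensor k (n + 1 + 1)) =
      ∑ i ∈ range (n + 1), (-1 : ℤ) ^ i • φ ((face ε i x).tensor k (n + 1)) +
        (-1 : ℤ) ^ (n + 1) • φ ((cyclicFace ε (n + 1) x).tensor k (n + 1))

namespace IsSignedCyclicOperator

variable {lam : ∀ n : ℕ, Module.End k (Cc k A B n)}

theorem pow_apply (hlam : IsSignedCyclicOperator lam) (n j : ℕ) (φ : Cc k A B n)
    (x : Entries A B) :
    (lam n ^ j) φ (x.tensor k (n + 1)) =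
      (-1 : ℤ) ^ (n * j) • φ (((rot n)^[j] x).tensor k (n + 1)) := by
  induction j generalizing x with
  | zero => simp
  | succ j ih =>
    rw [pow_succ', Module.End.mul_apply, hlam, ih, smul_smul, ← pow_add,
      ← Function.iterate_succ_apply, show n + n * j = n * (j + 1) by ring]

theorem pow_succ_self (hlam : IsSignedCyclicOperator lam) (n : ℕ) : lam n ^ (n + 1) = 1 :=
  LinearMap.ext fun φ => linearMap_ext fun x => by
    rw [hlam.pow_apply, (Nat.even_mul_succ_self n).neg_one_pow, one_smul, Module.End.one_apply,
      tensor_congr (agreeBelow_iterate_rot_self n x)]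

theorem sum_pow_apply (hlam : IsSignedCyclicOperator lam) (n : ℕ) (φ : Cc k A B n)
    (x : Entries A B) :
    (∑ j ∈ range (n + 1), lam n ^ j) φ (x.tensor k (n + 1)) =
      ∑ j ∈ range (n + 1), (-1 : ℤ) ^ (n * j) • φ (((rot n)^[j] x).tensor k (n + 1)) := by
  simp only [LinearMap.sum_apply, hlam.pow_apply]

theorem comp_sum_pow_eq_sum_pow_comp (hlam : IsSignedCyclicOperator lam) {ε : B →ₐ[k] A}
    {b btr : ∀ n : ℕ, Cc k A B n →ₗ[k] Cc k A B (n + 1)} (hb : IsFullDifferential ε b)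
    (hbtr : IsTruncatedDifferential ε btr) (n : ℕ) :
    (b n).comp (∑ j ∈ range (n + 1), lam n ^ j) =
      (∑ j ∈ range (n + 2), lam (n + 1) ^ j).comp (btr n) := by
  refine LinearMap.ext fun φ => linearMap_ext fun x => ?_
  rw [LinearMap.comp_apply, LinearMap.comp_apply, hb, hlam.sum_pow_apply (n + 1)]
  simp only [hlam.sum_pow_apply, hbtr n φ, smul_sum, smul_smul, ← pow_add]
  rw [sum_comm, ← sum_add_distrib]
  refine sum_sum_add_eq_sum_sum_of_reindex n _ _ _ (fun j i h => ?_) (fun j h => ?_)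
    (fun j i hij hj => ?_)
  · rw [tensor_congr (face_add_iterate_rot ε h x),
      show (n + 1) * j + (j + i) = i + n * j + 2 * j by ring, neg_one_pow_add_two_mul]
  · rw [tensor_congr (face_iterate_rot_succ ε h x),
      show (n + 1) * (j + 1) + j = n + 1 + n * j + 2 * j by ring, neg_one_pow_add_two_mul]
  · rw [tensor_congr (face_iterate_rot_of_lt ε hij hj x),
      show (n + 1) * (j + 1) + i = n + 1 - j + i + n * j + 2 * j by
        zify [(by omega : j ≤ n + 1)]; ring, neg_one_pow_add_two_mul]

end IsSignedCyclicOperator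

end Cochains

theorem secondary_cyclic_norm_identities
    (ε : B →ₐ[k] A)
    (lam : ∀ n : ℕ, Module.End k (Cc k A B n))
    (hlam : ∀ (n : ℕ) (φ : Cc k A B n) (a : ℕ → A) (β : ℕ → ℕ → B),
      lam n φ (gen k A B (n + 1) a β) =
        (-1 : ℤ) ^ n • φ (gen k A B (n + 1) (rotA A n a) (rotB B n β)))
    (b : ∀ n : ℕ, Cc k A B n →ₗ[k] Cc k A B (n + 1))
    (hb : ∀ (n : ℕ) (φ : Cc k A B n) (a : ℕ → A) (β : ℕ → ℕ → B),
      b n φ (gen k A B (n + 2) a β) =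
        (∑ i ∈ Finset.range (n + 1), (-1 : ℤ) ^ i •
            φ (gen k A B (n + 1) (mergeA k A B ε i a β) (mergeB B i β)))
        + (-1 : ℤ) ^ (n + 1) •
            φ (gen k A B (n + 1) (cmergeA k A B ε (n + 1) a β) (cmergeB B (n + 1) β)))
    (btr : ∀ n : ℕ, Cc k A B n →ₗ[k] Cc k A B (n + 1))
    (hbtr : ∀ (n : ℕ) (φ : Cc k A B n) (a : ℕ → A) (β : ℕ → ℕ → B),
      btr n φ (gen k A B (n + 2) a β) =
        ∑ i ∈ Finset.range (n + 1), (-1 : ℤ) ^ i •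
            φ (gen k A B (n + 1) (mergeA k A B ε i a β) (mergeB B i β)))
    (N : ∀ n : ℕ, Module.End k (Cc k A B n))
    (hN : ∀ n, N n = ∑ j ∈ Finset.range (n + 1), lam n ^ j) :
    (∀ n, N n * (1 - lam n) = 0) ∧
    (∀ n, (1 - lam n) * N n = 0) ∧
    (∀ n, (b n).comp (N n : Cc k A B n →ₗ[k] Cc k A B n) =
      (N (n + 1) : Cc k A B (n + 1) →ₗ[k] Cc k A B (n + 1)).comp (btr n)) := by
  have hrot : IsSignedCyclicOperator lam := fun n φ x => hlam n φ x.1 x.2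
  refine ⟨fun n => ?_, fun n => ?_, fun n => ?_⟩
  · rw [hN]
    exact (geom_sum_mul_neg (lam n) (n + 1)).trans (by rw [hrot.pow_succ_self, sub_self])
  · rw [hN]
    exact (mul_neg_geom_sum (lam n) (n + 1)).trans (by rw [hrot.pow_succ_self, sub_self])
  · rw [hN, hN]
    exact hrot.comp_sum_pow_eq_sum_pow_comp (fun n φ x => hb n φ x.1 x.2)
      (fun n φ x => hbtr n φ x.1 x.2) n

end
end
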